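/- Let G be an étale groupoid with compact unit space. Then the asymptotic dimension of the coarse space (G, 𝓔_G) is at most the dynamic asymptotic dimension of G. -/

import Mathlib

class GroupoidLike (G : Type*) where
  src : G → G
  rng : G → G
  inv : G → G
  mul : G → G → G

open GroupoidLike

def units (G : Type*) [GroupoidLike G] : Set G := {g | src g = g}

class EtaleGroupoid (G : Type*) [TopologicalSpace G] [GroupoidLike G] : Prop where
  cont_src : Continuous (src : G → G)
  cont_rng : Continuous (rng : G → G)
  cont_inv : Continuous (inv : G → G)
  localHomeo_src : IsLocalHomeomorph (src : G → G)
  localHomeo_rng : IsLocalHomeomorph (rng : G → G)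
  src_src : ∀ g : G, src (src g) = src g
  rng_src : ∀ g : G, rng (src g) = src g
  src_rng : ∀ g : G, src (rng g) = rng g
  rng_rng : ∀ g : G, rng (rng g) = rng g
  src_inv : ∀ g : G, src (inv g) = rng g
  rng_inv : ∀ g : G, rng (inv g) = src g
  inv_inv : ∀ g : G, inv (inv g) = g
  src_mul : ∀ g h : G, src g = rng h → src (mul g h) = src h
  rng_mul : ∀ g h : G, src g = rng h → rng (mul g h) = rng g
  mul_assoc : ∀ g h k : G, src g = rng h → src h = rng k →
    mul (mul g h) k = mul g (mul h k)
  inv_mul : ∀ g : G, mul (inv g) g = src g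
  mul_inv : ∀ g : G, mul g (inv g) = rng g
  mul_unit : ∀ g : G, mul g (src g) = g
  unit_mul : ∀ g : G, mul (rng g) g = g
  inv_mul_rev : ∀ g h : G, src g = rng h → inv (mul g h) = mul (inv h) (inv g)

section GpdDefs

variable {G : Type*} [GroupoidLike G]

/-- The restriction `G|_A = {g : s(g), r(g) ∈ A}`. -/
def restrict (A : Set G) : Set G := {g | src g ∈ A ∧ rng g ∈ A}

/-- Membership in the subgroupoid generated by `S`. -/
inductive gen (S : Set G) : G → Prop
  | base {g : G} : g ∈ S → gen S g
  | inv {g : G} : gen S g → gen S (GroupoidLike.inv g)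
  | mul {g h : G} : gen S g → gen S h → src g = rng h → gen S (GroupoidLike.mul g h)

/-- The subgroupoid generated by `S`, as a set. -/
def Gen (S : Set G) : Set G := {g | gen S g}

/-- Product of two subsets of a groupoid (composable products only). -/
def setMul (K L : Set G) : Set G :=
  {x | ∃ g ∈ K, ∃ h ∈ L, src g = rng h ∧ x = GroupoidLike.mul g h}

/-- Powers of a subset under groupoid multiplication. -/
def spow (K : Set G) : ℕ → Set G
  | 0 => units G
  | 1 => K
  | (n + 2) => setMul K (spow K (n + 1))

/-- A subset of `G` that is a subgroupoid. -/
def IsSubgroupoid (S : Set G) : Prop :=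
  (∀ g ∈ S, GroupoidLike.inv g ∈ S) ∧ (∀ g ∈ S, src g ∈ S) ∧ (∀ g ∈ S, rng g ∈ S) ∧
    ∀ g h : G, g ∈ S → h ∈ S → src g = rng h → GroupoidLike.mul g h ∈ S

variable [TopologicalSpace G]

/-- `K` belongs to `𝒪_c(G)`: open, relatively compact, and
`K = K ∪ K⁻¹ ∪ s(K) ∪ r(K)`. -/
def memOc (K : Set G) : Prop :=
  IsOpen K ∧ IsCompact (closure K) ∧ GroupoidLike.inv '' K ⊆ K ∧
    src '' K ⊆ K ∧ rng '' K ⊆ K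

/-- The (open) subgroupoid with underlying set `S ⊆ G` has dynamic asymptotic dimension
at most `d` (all notions taken relative to the subspace `S`). -/
def dadLEOn (S : Set G) (d : ℕ) : Prop :=
  ∀ K : Set G, K ⊆ S → (∃ O : Set G, IsOpen O ∧ K = O ∩ S) →
    IsCompact (closure K ∩ S) →
    ∃ U : Fin (d + 1) → Set G,
      (∀ i, (∃ O : Set G, IsOpen O ∧ U i = O ∩ S) ∧ U i ⊆ units G ∩ S) ∧
      (src '' K ∪ rng '' K) ⊆ (⋃ i, U i) ∧
      ∀ i, IsCompact (closure (Gen (K ∩ restrict (U i))) ∩ S)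

/-- The dynamic asymptotic dimension of the subgroupoid `S ⊆ G`, as an extended natural
number (`⊤` if no finite bound exists). -/
noncomputable def dadOn (S : Set G) : ℕ∞ :=
  sInf {e : ℕ∞ | ∃ d : ℕ, e = (d : ℕ∞) ∧ dadLEOn S d}

end GpdDefs

/-- The dynamic asymptotic dimension of `G`. -/
noncomputable def dad (G : Type*) [TopologicalSpace G] [GroupoidLike G] : ℕ∞ :=
  dadOn (Set.univ : Set G)

open GroupoidLike in
/-- A subset `E ⊆ {(g,h) : r(g) = r(h)}` of `G × G` is controlled for the canonical
coarse structure `𝓔_G` if `E ⊆ {(g,h) : g⁻¹h ∈ K} ∪ Δ_G` for some open relatively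
compact `K ⊆ G`. -/
def controlled {G : Type*} [TopologicalSpace G] [GroupoidLike G]
    (E : Set (G × G)) : Prop :=
  (∀ p ∈ E, rng p.1 = rng p.2) ∧
    ∃ K : Set G, IsOpen K ∧ IsCompact (closure K) ∧
      E ⊆ {p : G × G | GroupoidLike.mul (GroupoidLike.inv p.1) p.2 ∈ K} ∪
        {p : G × G | p.1 = p.2}

/-- The coarse space `(G, 𝓔_G)` has asymptotic dimension at most `d`: for every
controlled `E` there are a controlled `F` and a cover `𝒰 = 𝒰_0 ⊔ … ⊔ 𝒰_d` of `G` by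
`F`-bounded sets such that each family `𝒰 i` is `E`-separated. -/
def asdimLE (G : Type*) [TopologicalSpace G] [GroupoidLike G] (d : ℕ) : Prop :=
  ∀ E : Set (G × G), controlled E →
    ∃ F : Set (G × G), controlled F ∧
      ∃ 𝒰 : Fin (d + 1) → Set (Set G),
        (∀ g : G, ∃ i, ∃ A ∈ 𝒰 i, g ∈ A) ∧
        (∀ i, ∀ A ∈ 𝒰 i, A ×ˢ A ⊆ F) ∧
        (∀ i, ∀ A ∈ 𝒰 i, ∀ B ∈ 𝒰 i, A ≠ B → (A ×ˢ B) ∩ E = ∅)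

/-- The asymptotic dimension of the coarse space `(G, 𝓔_G)`. -/
noncomputable def asdim (G : Type*) [TopologicalSpace G] [GroupoidLike G] : ℕ∞ :=
  sInf {e : ℕ∞ | ∃ d : ℕ, e = (d : ℕ∞) ∧ asdimLE G d}


section AuxProof

open GroupoidLike

variable {G : Type*} [TopologicalSpace G] [GroupoidLike G] [EtaleGroupoid G]

lemma units_eq_range' : units G = Set.range (src : G → G) := by
  ext u
  constructor
  · intro hu; exact ⟨u, hu⟩
  · rintro ⟨g, rfl⟩; exact EtaleGroupoid.src_src g

lemma isOpen_units' : IsOpen (units G) := by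
  rw [units_eq_range']
  exact (EtaleGroupoid.localHomeo_src : IsLocalHomeomorph (src : G → G)).isOpenMap.isOpen_range

lemma gen_src' {S : Set G} {g : G} (h : gen S g) : gen S (src g) := by
  have := gen.mul (gen.inv h) h (by rw [EtaleGroupoid.src_inv])
  rwa [EtaleGroupoid.inv_mul] at this

lemma gen_restrict' {S U : Set G} (hS : S ⊆ restrict U) {g : G} (h : gen S g) :
    g ∈ restrict U := by
  induction h with
  | base hg => exact hS hg
  | inv _ ih =>
      exact ⟨by rw [EtaleGroupoid.src_inv]; exact ih.2, by rw [EtaleGroupoid.rng_inv]; exact ih.1⟩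
  | mul _ _ hc ih1 ih2 =>
      exact ⟨by rw [EtaleGroupoid.src_mul _ _ hc]; exact ih2.1,
        by rw [EtaleGroupoid.rng_mul _ _ hc]; exact ih1.2⟩

lemma mul_quot_quot' {g h k : G} (hgh : rng g = rng h) (hhk : rng h = rng k) :
    mul (mul (inv g) h) (mul (inv h) k) = mul (inv g) k := by
  have c1 : src (inv g) = rng h := by rw [EtaleGroupoid.src_inv]; exact hgh
  have c2 : src (inv h) = rng k := by rw [EtaleGroupoid.src_inv]; exact hhk
  have c3 : src h = rng (mul (inv h) k) := by
    rw [EtaleGroupoid.rng_mul _ _ c2, EtaleGroupoid.rng_inv]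
  rw [EtaleGroupoid.mul_assoc (inv g) h _ c1 c3,
    ← EtaleGroupoid.mul_assoc h (inv h) k (EtaleGroupoid.rng_inv h).symm c2,
    EtaleGroupoid.mul_inv, hhk, EtaleGroupoid.unit_mul]

lemma inv_quot' {g h : G} (hgh : rng g = rng h) :
    inv (mul (inv g) h) = mul (inv h) g := by
  rw [EtaleGroupoid.inv_mul_rev (inv g) h (by rw [EtaleGroupoid.src_inv]; exact hgh),
    EtaleGroupoid.inv_inv]

/-- The "class" of `g` relative to a set `S`. -/
def cls (S : Set G) (g : G) : Set G :=
  {h | rng h = rng g ∧ GroupoidLike.mul (GroupoidLike.inv g) h ∈ S}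

lemma cls_symm' {T : Set G} {g h : G} (hh : h ∈ cls (Gen T) g) : g ∈ cls (Gen T) h := by
  refine ⟨hh.1.symm, ?_⟩
  rw [← inv_quot' hh.1.symm]
  exact gen.inv hh.2

lemma cls_trans' {T : Set G} {g h k : G} (hh : h ∈ cls (Gen T) g) (hk : k ∈ cls (Gen T) h) :
    k ∈ cls (Gen T) g := by
  refine ⟨hk.1.trans hh.1, ?_⟩
  rw [← mul_quot_quot' hh.1.symm hk.1.symm]
  refine gen.mul hh.2 hk.2 ?_
  rw [EtaleGroupoid.src_mul _ _ (by rw [EtaleGroupoid.src_inv]; exact hh.1.symm),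
    EtaleGroupoid.rng_mul _ _ (by rw [EtaleGroupoid.src_inv]; exact hk.1.symm),
    EtaleGroupoid.rng_inv]

lemma cls_eq' {T : Set G} {g h : G} (hh : h ∈ cls (Gen T) g) :
    cls (Gen T) g = cls (Gen T) h := by
  ext k
  exact ⟨fun hk => cls_trans' (cls_symm' hh) hk, fun hk => cls_trans' hh hk⟩

lemma wlc' [T2Space G] (hcpt : IsCompact (units G)) : WeaklyLocallyCompactSpace G := by
  constructor
  intro g
  obtain ⟨e, hge, hfe⟩ :=
    (EtaleGroupoid.localHomeo_src : IsLocalHomeomorph (src : G → G)) g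
  have hu : src g ∈ units G := EtaleGroupoid.src_src g
  have htgt : src g ∈ e.target := by
    have := e.map_source hge
    rw [← hfe] at this
    exact this
  have hDc : IsCompact (units G \ e.target) := hcpt.diff e.open_target
  have hgD : src g ∉ units G \ e.target := fun hd => hd.2 htgt
  obtain ⟨V₂, V₁, hV₂o, hV₁o, hDV₂, hgV₁, hdisj⟩ := hDc.separation_of_notMem hgD
  set W : Set G := V₁ ∩ units G ∩ e.target with hW
  have hWo : IsOpen W := (hV₁o.inter isOpen_units').inter e.open_target
  have hgW : src g ∈ W := ⟨⟨hgV₁, hu⟩, htgt⟩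
  have hclW_sub : closure W ⊆ units G :=
    closure_minimal (fun x hx => hx.1.2) hcpt.isClosed
  have hclW_cpt : IsCompact (closure W) :=
    hcpt.of_isClosed_subset isClosed_closure hclW_sub
  have hclW_tgt : closure W ⊆ e.target := by
    intro x hx
    by_contra hxt
    have hxV2 : x ∈ V₂ := hDV₂ ⟨hclW_sub hx, hxt⟩
    have hWc : closure W ⊆ V₂ᶜ :=
      closure_minimal (fun y hy hy2 => Set.disjoint_left.1 hdisj hy2 hy.1.1)
        (isClosed_compl_iff.2 hV₂o)
    exact hWc hx hxV2
  refine ⟨e.symm '' closure W,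
    hclW_cpt.image_of_continuousOn (e.continuousOn_symm.mono hclW_tgt), ?_⟩
  rw [mem_nhds_iff]
  refine ⟨e.source ∩ e ⁻¹' W, ?_, e.isOpen_inter_preimage hWo, hge, ?_⟩
  · rintro x ⟨hxs, hxW⟩
    exact ⟨e x, subset_closure hxW, e.left_inv hxs⟩
  · show e g ∈ W
    rw [← hfe]
    exact hgW

theorem dad_to_asdim [T2Space G] (hcpt : IsCompact (units G)) (d : ℕ)
    (hd : dadLEOn (Set.univ : Set G) d) : asdimLE G d := by
  intro E hE
  obtain ⟨hErng, K, hKo, hKc, hEsub⟩ := hE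
  set K' : Set G := K ∪ (inv '' K) ∪ units G with hK'def
  have hinvK : (inv '' K : Set G) = inv ⁻¹' K := by
    ext x
    constructor
    · rintro ⟨y, hy, rfl⟩
      show inv (inv y) ∈ K
      rwa [EtaleGroupoid.inv_inv]
    · intro hx
      exact ⟨inv x, hx, EtaleGroupoid.inv_inv x⟩
  have hK'o : IsOpen K' :=
    (hKo.union (by rw [hinvK]; exact hKo.preimage EtaleGroupoid.cont_inv)).union isOpen_units'
  have hC : IsCompact (closure K ∪ inv '' closure K ∪ units G) :=
    (hKc.union (hKc.image EtaleGroupoid.cont_inv)).union hcpt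
  have hK'sub : K' ⊆ closure K ∪ inv '' closure K ∪ units G :=
    Set.union_subset_union
      (Set.union_subset_union subset_closure (Set.image_mono subset_closure))
      subset_rfl
  have hclK' : IsCompact (closure K') :=
    hC.of_isClosed_subset isClosed_closure (closure_minimal hK'sub hC.isClosed)
  obtain ⟨U, hU, hUcov, hUcpt⟩ := hd K' (Set.subset_univ _)
    ⟨K', hK'o, (Set.inter_univ _).symm⟩ (by rw [Set.inter_univ]; exact hclK')
  set T : Fin (d + 1) → Set G := fun i => K' ∩ restrict (U i) with hTdef
  have hScpt : ∀ i, IsCompact (closure (Gen (T i))) := fun i => by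
    have := hUcpt i
    rwa [Set.inter_univ] at this
  have hSrestrict : ∀ i, Gen (T i) ⊆ restrict (U i) := fun i g hg =>
    gen_restrict' Set.inter_subset_right hg
  haveI := wlc' (G := G) hcpt
  obtain ⟨Kc, hKcc, hKcsub⟩ :=
    exists_compact_superset (isCompact_iUnion fun i => hScpt i)
  set L : Set G := interior Kc with hLdef
  have hLclcpt : IsCompact (closure L) :=
    hKcc.of_isClosed_subset isClosed_closure (closure_minimal interior_subset hKcc.isClosed)
  have hGenL : ∀ i, Gen (T i) ⊆ L := fun i g hg =>
    hKcsub (Set.mem_iUnion.2 ⟨i, subset_closure hg⟩)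
  refine ⟨{p : G × G | rng p.1 = rng p.2 ∧ mul (inv p.1) p.2 ∈ L},
    ⟨fun p hp => hp.1, L, isOpen_interior, hLclcpt, fun p hp => Or.inl hp.2⟩,
    fun i => {A | ∃ g : G, src g ∈ U i ∧ A = cls (Gen (T i)) g}, ?_, ?_, ?_⟩
  · -- cover
    intro g
    have hsg : src g ∈ ⋃ i, U i := by
      apply hUcov
      exact Or.inl ⟨src g, Or.inr (EtaleGroupoid.src_src g), EtaleGroupoid.src_src g⟩
    obtain ⟨i, hi⟩ := Set.mem_iUnion.1 hsg
    refine ⟨i, cls (Gen (T i)) g, ⟨g, hi, rfl⟩, rfl, ?_⟩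
    rw [EtaleGroupoid.inv_mul]
    exact gen.base ⟨Or.inr (EtaleGroupoid.src_src g),
      by rw [EtaleGroupoid.src_src]; exact hi, by rw [EtaleGroupoid.rng_src]; exact hi⟩
  · -- bounded
    rintro i A ⟨g, hgU, rfl⟩ ⟨h, h'⟩ ⟨hh, hh'⟩
    refine ⟨hh.1.trans hh'.1.symm, ?_⟩
    exact hGenL i (cls_trans' (cls_symm' hh) hh').2
  · -- separated
    rintro i A ⟨g, hgU, rfl⟩ B ⟨g', hg'U, rfl⟩ hAB
    rw [Set.eq_empty_iff_forall_notMem]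
    rintro ⟨h, h'⟩ ⟨⟨hh, hh'⟩, hEmem⟩
    have hrng : rng h = rng h' := hErng _ hEmem
    rcases hEsub hEmem with hk | heq
    · have c' : src (inv h) = rng h' := by rw [EtaleGroupoid.src_inv]; exact hrng
      have hsrc_h : src h ∈ U i := by
        have := (hSrestrict i hh.2).1
        rwa [EtaleGroupoid.src_mul _ _ (by rw [EtaleGroupoid.src_inv]; exact hh.1.symm)] at this
      have hsrc_h' : src h' ∈ U i := by
        have := (hSrestrict i hh'.2).1
        rwa [EtaleGroupoid.src_mul _ _ (by rw [EtaleGroupoid.src_inv]; exact hh'.1.symm)] at this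
      have hmem : mul (inv h) h' ∈ Gen (T i) := by
        refine gen.base ⟨Or.inl (Or.inl hk), ?_, ?_⟩
        · rw [EtaleGroupoid.src_mul _ _ c']
          exact hsrc_h'
        · rw [EtaleGroupoid.rng_mul _ _ c', EtaleGroupoid.rng_inv]
          exact hsrc_h
      have hh'h : h' ∈ cls (Gen (T i)) h := ⟨hrng.symm, hmem⟩
      exact hAB ((cls_eq' hh).trans ((cls_eq' hh'h).trans (cls_eq' hh').symm))
    · have heq' : h = h' := heq
      have : h ∈ cls (Gen (T i)) g' := heq' ▸ hh'
      exact hAB ((cls_eq' hh).trans (cls_eq' this).symm)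

end AuxProof

/-- For an étale groupoid `G` with compact unit space,
`asdim (G, 𝓔_G) ≤ dad G`. -/
theorem stmt11 {G : Type*} [TopologicalSpace G] [T2Space G] [GroupoidLike G]
    [EtaleGroupoid G] (hcpt : IsCompact (units G)) :
    asdim G ≤ dad G := by
  unfold asdim dad dadOn
  apply sInf_le_sInf
  rintro e ⟨d, rfl, hd⟩
  exact ⟨d, rfl, dad_to_asdim hcpt d hd⟩
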